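/- Let α be a type of program states, let c₁, c₂ : α → Prop be decidable predicates (branch guards) and u₁, u₂ : α → α be state updates. Assume the guards are disjoint (for every state s, not both c₁ s and c₂ s hold) and that each update preserves both guards (for all s: c₁ (u₂ s) ↔ c₁ s and c₂ (u₁ s) ↔ c₂ s). Define the guarded update gᵢ s = if cᵢ s then uᵢ s else s. Then g₁ ∘ g₂ = g₂ ∘ g₁; that is, the two guarded statements can be executed in either order with the same result, so the syntactic write-after-write dependency between them is a false dependency. -/

import Mathlib

/-! By disjointness at most one guard holds at a state `s`, say `c₁`. Then the second guarded
update is a no-op at `s`, and also after the first one, because `u₁` cannot switch `c₂` on. -/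

section GuardedUpdate

variable {α : Type*}

def guardedUpdate (c : α → Prop) [DecidablePred c] (u : α → α) (s : α) : α :=
  if c s then u s else s

theorem guardedUpdate_of_pos {c : α → Prop} [DecidablePred c] (u : α → α) {s : α}
    (h : c s) : guardedUpdate c u s = u s :=
  if_pos h

theorem guardedUpdate_of_not {c : α → Prop} [DecidablePred c] (u : α → α) {s : α}
    (h : ¬ c s) : guardedUpdate c u s = s :=
  if_neg h

theorem guardedUpdate_guardedUpdate_of_not {c₁ c₂ : α → Prop} [DecidablePred c₁]
    [DecidablePred c₂] {u₁ : α → α} (u₂ : α → α) {s : α} (h₂ : ¬ c₂ s)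
    (hpres : c₂ (u₁ s) → c₂ s) :
    guardedUpdate c₂ u₂ (guardedUpdate c₁ u₁ s) = guardedUpdate c₁ u₁ s := by
  by_cases h₁ : c₁ s
  · rw [guardedUpdate_of_pos u₁ h₁, guardedUpdate_of_not u₂ (mt hpres h₂)]
  · rw [guardedUpdate_of_not u₁ h₁, guardedUpdate_of_not u₂ h₂]

theorem commute_guardedUpdate {c₁ c₂ : α → Prop} [DecidablePred c₁] [DecidablePred c₂]
    {u₁ u₂ : α → α} (hdisj : ∀ s, ¬ (c₁ s ∧ c₂ s))
    (hpres₁ : ∀ s, c₁ (u₂ s) → c₁ s) (hpres₂ : ∀ s, c₂ (u₁ s) → c₂ s) :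
    Function.Commute (guardedUpdate c₁ u₁) (guardedUpdate c₂ u₂) := by
  intro s
  rcases not_and_or.mp (hdisj s) with h₁ | h₂
  · rw [guardedUpdate_of_not u₁ h₁, guardedUpdate_guardedUpdate_of_not u₁ h₁ (hpres₁ s)]
  · rw [guardedUpdate_of_not u₂ h₂, guardedUpdate_guardedUpdate_of_not u₂ h₂ (hpres₂ s)]

end GuardedUpdate

/-- If two guarded updates have disjoint guards, and each update preserves both
guards, then the two guarded statements commute: they can be executed in either
order with the same result, so the syntactic write-after-write dependency
between them is a false dependency. -/
theorem guarded_updates_commute {α : Type*}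
    (c₁ c₂ : α → Prop) [DecidablePred c₁] [DecidablePred c₂]
    (u₁ u₂ : α → α)
    (hdisj : ∀ s, ¬ (c₁ s ∧ c₂ s))
    (hpres₁ : ∀ s, c₁ (u₂ s) ↔ c₁ s)
    (hpres₂ : ∀ s, c₂ (u₁ s) ↔ c₂ s) :
    (fun s => if c₁ s then u₁ s else s) ∘ (fun s => if c₂ s then u₂ s else s) =
    (fun s => if c₂ s then u₂ s else s) ∘ (fun s => if c₁ s then u₁ s else s) :=
  (commute_guardedUpdate hdisj (fun s => (hpres₁ s).mp) (fun s => (hpres₂ s).mp)).comp_eq
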